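/- arXiv:2407.04361 — 3 statements merged into one kernel-verified Lean document; each statement's English description precedes it below -/
import Mathlib

section
/- Let d ≥ 2 and k ≥ 2 be integers. Then the d-variate polynomial N_{k,d} is not the zero polynomial; consequently the non-conforming Crouzeix–Raviart simplex function B_k^{CR,K̂} = N_{k,d}/d does not vanish identically for k ≥ 2. -/
/-- `Q_{k,d}(x)`: the explicit representation of the Jacobi polynomial
`P_k^{(0,d-2)}(1-2x)`. -/
noncomputable def Qpoly (d k : ℕ) (x : ℝ) : ℝ :=
  ∑ ℓ ∈ Finset.range (k + 1),
    (-1 : ℝ) ^ ℓ * ((k + ℓ + d - 2).choose ℓ) * (k.choose ℓ) * x ^ ℓ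

/-- `R_{k,d}(x)`: the explicit representation of `P_k^{(0,d-2)}(2x-1)`. -/
noncomputable def Rpoly (d k : ℕ) (x : ℝ) : ℝ :=
  (-1 : ℝ) ^ k * ∑ ℓ ∈ Finset.range (k + 1),
    (-1 : ℝ) ^ ℓ * ((k + ℓ + d - 2).choose ℓ) * ((k + d - 2).choose (ℓ + d - 2))
      * x ^ ℓ

/-- The `d`-variate polynomial `N_{k,d}`; on the reference simplex it equals
`d` times the non-conforming Crouzeix–Raviart simplex function `B_k^{CR,K̂}`. -/
noncomputable def Npoly (d k : ℕ) (x : Fin d → ℝ) : ℝ :=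
  -1 + ∑ j, Qpoly d k (x j) + Rpoly d k (∑ j, x j)

/-!
Along the plane `x₁ + ⋯ + x_d = 0` the `R`-part of `N_{k,d}` is constant, so comparing
`N_{k,d}` at `0` and at `e₁ - e₂` leaves `Q(1) + Q(-1) - 2Q(0)`. The odd coefficients of
`Q(x) + Q(-x)` cancel and the even ones are `2 C(k+ℓ+d-2, ℓ) C(k, ℓ) x^ℓ ≥ 0`; for `k ≥ 2`
the term `ℓ = 2` makes `Q(1) + Q(-1) > 2 = 2Q(0)`, so `N_{k,d}` takes two different values.
-/

lemma Qpoly_zero (d k : ℕ) : Qpoly d k 0 = 1 := by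
  rw [Qpoly, Finset.sum_eq_single 0]
  · simp
  · intro ℓ _ hℓ
    simp [zero_pow hℓ]
  · simp

lemma neg_pow_add_pow_nonneg (x : ℝ) (ℓ : ℕ) : 0 ≤ (-x) ^ ℓ + x ^ ℓ := by
  rcases Nat.even_or_odd ℓ with h | h
  · rw [h.neg_pow, ← two_mul]
    exact mul_nonneg zero_le_two (h.pow_nonneg x)
  · rw [h.neg_pow, neg_add_cancel]

lemma Qpoly_add_Qpoly_neg (d k : ℕ) (x : ℝ) :
    Qpoly d k x + Qpoly d k (-x) = ∑ ℓ ∈ Finset.range (k + 1),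
      ((k + ℓ + d - 2).choose ℓ * k.choose ℓ : ℝ) * ((-x) ^ ℓ + x ^ ℓ) := by
  rw [Qpoly, Qpoly, ← Finset.sum_add_distrib]
  refine Finset.sum_congr rfl fun ℓ _ => ?_
  rw [neg_pow x ℓ]
  have hsq : ((-1 : ℝ) ^ ℓ) ^ 2 = 1 := by
    rw [← pow_mul, mul_comm, pow_mul, neg_one_sq, one_pow]
  linear_combination ((k + ℓ + d - 2).choose ℓ * k.choose ℓ : ℝ) * x ^ ℓ * hsq

lemma two_lt_Qpoly_add_Qpoly_neg (d : ℕ) {k : ℕ} (hk : 2 ≤ k) {x : ℝ} (hx : x ≠ 0) :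
    2 < Qpoly d k x + Qpoly d k (-x) := by
  set c : ℕ → ℝ := fun ℓ => (k + ℓ + d - 2).choose ℓ * k.choose ℓ
  have hc2 : 1 ≤ c 2 := by
    have h₁ : 1 ≤ (k + 2 + d - 2).choose 2 := Nat.choose_pos (by omega)
    have h₂ : 1 ≤ k.choose 2 := Nat.choose_pos hk
    simpa [c] using (by exact_mod_cast Nat.mul_le_mul h₁ h₂ : (1 : ℝ) * 1 ≤ _)
  have hsub : ({0, 2} : Finset ℕ) ⊆ Finset.range (k + 1) := by
    intro ℓ hℓ
    simp only [Finset.mem_insert, Finset.mem_singleton] at hℓ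
    simp only [Finset.mem_range]
    omega
  have hle := Finset.sum_le_sum_of_subset_of_nonneg hsub fun ℓ _ _ =>
    mul_nonneg (by positivity : 0 ≤ c ℓ) (neg_pow_add_pow_nonneg x ℓ)
  rw [Finset.sum_pair (by norm_num)] at hle
  have hx2 : 0 < x ^ 2 := by positivity
  rw [Qpoly_add_Qpoly_neg]
  simp only [c, Nat.choose_zero_right, Nat.cast_one, mul_one, pow_zero, even_two,
    Even.neg_pow] at hle hc2 ⊢
  nlinarith

lemma Npoly_sub_Npoly_zero {d : ℕ} (k : ℕ) {x : Fin d → ℝ} (hx : ∑ j, x j = 0) :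
    Npoly d k x - Npoly d k 0 = ∑ j, (Qpoly d k (x j) - 1) := by
  simp only [Npoly, hx, Pi.zero_apply, Finset.sum_const_zero, Qpoly_zero, Finset.sum_sub_distrib]
  simp

/-- For `d ≥ 2` and `k ≥ 2` the polynomial `N_{k,d}` is not identically zero;
consequently the non-conforming Crouzeix–Raviart simplex function
`B_k^{CR,K̂} = N_{k,d}/d` does not vanish identically. -/
theorem Npoly_ne_zero (d k : ℕ) (hd : 2 ≤ d) (hk : 2 ≤ k) :
    ∃ x : Fin d → ℝ, Npoly d k x ≠ 0 := by
  let i : Fin d := ⟨0, by omega⟩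
  let j : Fin d := ⟨1, by omega⟩
  have hij : i ≠ j := by simp [i, j, Fin.ext_iff]
  let x : Fin d → ℝ := Pi.single i 1 - Pi.single j 1
  have hsum : ∑ m, x m = 0 := by simp [x, Finset.sum_sub_distrib]
  have hdiff : Npoly d k x - Npoly d k 0 = Qpoly d k 1 + Qpoly d k (-1) - 2 := by
    rw [Npoly_sub_Npoly_zero k hsum, Fintype.sum_eq_add i j hij]
    · simp [x, hij, hij.symm]
      ring
    · rintro m ⟨hmi, hmj⟩
      simp [x, hmi, hmj, Qpoly_zero]
  by_contra! hN
  have := two_lt_Qpoly_add_Qpoly_neg d hk one_ne_zero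
  linarith [hN x, hN 0]
end

section
/- Let ℓ ≥ 1 and m ≥ ℓ+1 be integers and let v be a real polynomial in the variables x_1,…,x_ℓ of total degree at most m that vanishes at every point of the boundary of the standard simplex Δ_ℓ := {x ∈ ℝ^ℓ : x_j ≥ 0 for all j and x_1+⋯+x_ℓ ≤ 1} (i.e. v vanishes on each facet {x ∈ Δ_ℓ : x_i = 0}, 1 ≤ i ≤ ℓ, and on {x ∈ Δ_ℓ : x_1+⋯+x_ℓ = 1}). Then there exists a real polynomial q in x_1,…,x_ℓ of total degree at most m−(ℓ+1) such that v = x_1 ⋯ x_ℓ · (1 − x_1 − ⋯ − x_ℓ) · q. -/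
/-!
The `ℓ + 1` barycentric coordinates `x_1, …, x_ℓ, 1 - ∑ x_j` of `Δ_ℓ` have total degree one, so
they are irreducible in the factorial ring `ℝ[x_1, …, x_ℓ]`, and no two are associated (compare
their values at the vertices). If `v` vanishes on the facet where the coordinate `λ = x_i - g`
vanishes, then substituting `g` for `x_i` in `v` gives a polynomial vanishing on all of `Δ_ℓ`,
hence zero because `Δ_ℓ` contains a box; so `λ ∣ v`. Pairwise coprime divisors of `v` have
their product dividing `v`, and additivity of the total degree over a domain bounds the
quotient.
-/

open MvPolynomial

namespace MvPolynomial

theorem totalDegree_finsetProd_of_isDomain {σ R ι : Type*} [CommRing R] [IsDomain R]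
    (s : Finset ι) {f : ι → MvPolynomial σ R} (hf : ∀ i ∈ s, f i ≠ 0) :
    (∏ i ∈ s, f i).totalDegree = ∑ i ∈ s, (f i).totalDegree := by
  classical
  induction s using Finset.induction_on with
  | empty => simp
  | insert a s has ih =>
    rw [Finset.forall_mem_insert] at hf
    rw [Finset.prod_insert has, Finset.sum_insert has,
      totalDegree_mul_of_isDomain hf.1 (Finset.prod_ne_zero_iff.mpr hf.2), ih hf.2]

theorem sub_dvd_aeval_sub {R S σ : Type*} [CommSemiring R] [CommRing S] [Algebra R S]
    {d : S} {a b : σ → S} (h : ∀ i, d ∣ a i - b i) (p : MvPolynomial σ R) :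
    d ∣ aeval a p - aeval b p := by
  induction p using MvPolynomial.induction_on with
  | C c => simp
  | add p q hp hq => simpa [add_sub_add_comm] using dvd_add hp hq
  | mul_X p i hp =>
    have key : aeval a p * a i - aeval b p * b i
        = (aeval a p - aeval b p) * a i + aeval b p * (a i - b i) := by ring
    simpa [key] using dvd_add (dvd_mul_of_dvd_left hp _) (dvd_mul_of_dvd_right (h i) _)

section Update

variable {R σ : Type*} [CommRing R] [DecidableEq σ]

theorem X_sub_dvd_sub_aeval_update (i : σ) (g p : MvPolynomial σ R) :
    X i - g ∣ p - aeval (Function.update X i g) p := by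
  nth_rewrite 1 [← aeval_X_left_apply p]
  refine sub_dvd_aeval_sub (fun j => ?_) p
  rcases eq_or_ne j i with rfl | hj
  · simp
  · simp [hj]

theorem eval_aeval_update (x : σ → R) (i : σ) (g p : MvPolynomial σ R) :
    eval x (aeval (Function.update X i g) p) = eval (Function.update x i (eval x g)) p := by
  change eval₂Hom _ x (bind₁ _ p) = _
  rw [eval₂Hom_bind₁]
  congr 2
  ext j
  rcases eq_or_ne j i with rfl | hj
  · simp
  · simp [hj]

end Update

end MvPolynomial

section Simplex

variable {σ : Type*} [Fintype σ]

theorem Fintype.sum_update_eq_sum_add_sub {M : Type*} [AddCommGroup M] [DecidableEq σ]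
    (x : σ → M) (i : σ) (c : M) :
    ∑ j, Function.update x i c j = ∑ j, x j + (c - x i) := by
  rw [Finset.sum_update_of_mem (Finset.mem_univ i),
    Finset.sum_eq_add_sum_sdiff_singleton_of_mem (Finset.mem_univ i) x]
  abel

/-- The solid simplex `Δ`; Mathlib's `stdSimplex` is only its facet `∑ x = 1`. -/
def cornerSimplex (σ : Type*) [Fintype σ] : Set (σ → ℝ) :=
  {x | (∀ j, 0 ≤ x j) ∧ ∑ j, x j ≤ 1}

theorem update_mem_cornerSimplex [DecidableEq σ] {x : σ → ℝ} (hx : x ∈ cornerSimplex σ) (i : σ)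
    {c : ℝ} (hc₀ : 0 ≤ c) (hc : c ≤ x i + (1 - ∑ j, x j)) :
    Function.update x i c ∈ cornerSimplex σ := by
  refine ⟨fun j => ?_, ?_⟩
  · rcases eq_or_ne j i with rfl | hj
    · simpa using hc₀
    · simpa [hj] using hx.1 j
  · rw [Fintype.sum_update_eq_sum_add_sub]
    linarith

namespace MvPolynomial

theorem eq_zero_of_forall_mem_cornerSimplex {p : MvPolynomial σ ℝ}
    (h : ∀ x ∈ cornerSimplex σ, eval x p = 0) : p = 0 := by
  set ε : ℝ := 1 / (Fintype.card σ + 1)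
  have hε : 0 < ε := by positivity
  refine funext_set (fun _ => Set.Icc 0 ε) (fun _ => Set.Icc_infinite hε) fun x hx => ?_
  simp only [Set.mem_pi, Set.mem_univ, Set.mem_Icc, forall_const] at hx
  rw [map_zero]
  refine h x ⟨fun j => (hx j).1, ?_⟩
  calc ∑ j, x j ≤ ∑ _j : σ, ε := Finset.sum_le_sum fun j _ => (hx j).2
    _ = Fintype.card σ / (Fintype.card σ + 1) := by simp [ε, div_eq_mul_inv]
    _ ≤ 1 := by rw [div_le_one (by positivity)]; linarith

theorem X_sub_dvd_of_eval_update_eq_zero [DecidableEq σ] (i : σ) {g p : MvPolynomial σ ℝ}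
    (h : ∀ x ∈ cornerSimplex σ, eval (Function.update x i (eval x g)) p = 0) :
    X i - g ∣ p := by
  have hsub : aeval (Function.update X i g) p = 0 :=
    eq_zero_of_forall_mem_cornerSimplex fun x hx => by rw [eval_aeval_update]; exact h x hx
  simpa only [hsub, sub_zero] using X_sub_dvd_sub_aeval_update i g p

end MvPolynomial

end Simplex

namespace MvPolynomial

section Barycentric

variable {σ : Type*} [Fintype σ]

noncomputable def barycentric : Option σ → MvPolynomial σ ℝ
  | none => 1 - ∑ i, X i
  | some i => X i

@[simp]
theorem eval_barycentric_none (x : σ → ℝ) : eval x (barycentric none) = 1 - ∑ i, x i := by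
  simp [barycentric]

@[simp]
theorem eval_barycentric_some (x : σ → ℝ) (i : σ) : eval x (barycentric (some i)) = x i := by
  simp [barycentric]

theorem totalDegree_barycentric [Nonempty σ] (o : Option σ) :
    (barycentric o).totalDegree = 1 := by
  classical
  cases o with
  | some i => exact totalDegree_X i
  | none =>
    obtain ⟨i⟩ := ‹Nonempty σ›
    refine le_antisymm ?_ ?_
    · refine (totalDegree_sub _ _).trans (max_le (by simp) ?_)
      exact (totalDegree_finsetSum _ _).trans (Finset.sup_le fun j _ => (totalDegree_X j).le)
    · have hcoeff : coeff (Finsupp.single i 1) (barycentric none) ≠ 0 := by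
        simp [barycentric, coeff_sum, coeff_X, coeff_one, Finsupp.single_left_inj one_ne_zero,
          eq_comm (a := (0 : σ →₀ ℕ))]
      simpa using le_totalDegree (mem_support_iff.mpr hcoeff)

theorem barycentric_ne_zero [Nonempty σ] (o : Option σ) : barycentric o ≠ 0 := by
  intro h
  simpa [h] using totalDegree_barycentric o

theorem irreducible_barycentric [Nonempty σ] (o : Option σ) : Irreducible (barycentric o) := by
  classical
  refine irreducible_of_totalDegree_eq_one (totalDegree_barycentric o) fun r hr => ?_
  cases o with
  | none => exact isUnit_of_dvd_one (by simpa [barycentric, coeff_sum] using hr 0)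
  | some i => exact isUnit_of_dvd_one (by simpa [barycentric] using hr (Finsupp.single i 1))

theorem eq_of_barycentric_dvd_barycentric {a b : Option σ}
    (h : barycentric a ∣ barycentric b) : a = b := by
  classical
  have key x (hx : eval x (barycentric a) = 0) : eval x (barycentric b) = 0 :=
    zero_dvd_iff.mp (hx ▸ map_dvd (eval x) h)
  cases a with
  | none => cases b with
    | none => rfl
    | some j => simpa using key (Pi.single j 1)
  | some i => cases b with
    | none => simpa only [eval_barycentric_some, eval_barycentric_none, Pi.zero_apply,
        Finset.sum_const_zero, sub_zero, one_ne_zero, forall_const] using key 0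
    | some j => exact congrArg some (X_dvd_X.mp h)

theorem barycentric_dvd_of_eval_eq_zero [Nonempty σ] (o : Option σ) {p : MvPolynomial σ ℝ}
    (h : ∀ x ∈ cornerSimplex σ, eval x (barycentric o) = 0 → eval x p = 0) :
    barycentric o ∣ p := by
  classical
  cases o with
  | some i =>
    show X i ∣ p
    simpa using X_sub_dvd_of_eval_update_eq_zero (g := 0) i fun x hx =>
      h _ (update_mem_cornerSimplex hx i le_rfl (by rw [map_zero]; linarith [hx.1 i, hx.2])) (by simp)
  | none =>
    obtain ⟨i⟩ := ‹Nonempty σ›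
    -- `x_i ↦ x_i + (1 - ∑ x)` moves `Δ` onto its facet `∑ x = 1`.
    have hdvd := X_sub_dvd_of_eval_update_eq_zero (g := X i + barycentric none) i fun x hx => by
      have hc : eval x (X i + barycentric none) = x i + (1 - ∑ j, x j) := by simp
      refine h _ (update_mem_cornerSimplex hx i ?_ hc.le) ?_
      · rw [hc]; linarith [hx.1 i, hx.2]
      · rw [eval_barycentric_none, Fintype.sum_update_eq_sum_add_sub, hc]; ring
    simpa using hdvd

theorem prod_barycentric_dvd [Nonempty σ] {p : MvPolynomial σ ℝ}
    (h : ∀ o, ∀ x ∈ cornerSimplex σ, eval x (barycentric o) = 0 → eval x p = 0) :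
    ∏ o, barycentric o ∣ p :=
  Fintype.prod_dvd_of_isRelPrime
    (fun a _ hab => (irreducible_barycentric a).isRelPrime_iff_not_dvd.mpr
      fun hdvd => hab (eq_of_barycentric_dvd_barycentric hdvd))
    fun o => barycentric_dvd_of_eval_eq_zero o (h o)

theorem totalDegree_prod_barycentric [Nonempty σ] :
    (∏ o, barycentric o : MvPolynomial σ ℝ).totalDegree = Fintype.card σ + 1 := by
  rw [totalDegree_finsetProd_of_isDomain _ fun o _ => barycentric_ne_zero o]
  simp [totalDegree_barycentric]

end Barycentric

end MvPolynomial

theorem bubble_factorization_general (ℓ m : ℕ) (hℓ : 1 ≤ ℓ)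
    (v : MvPolynomial (Fin ℓ) ℝ) (hv : v.totalDegree ≤ m)
    (hbd : ∀ x : Fin ℓ → ℝ, (∀ j, 0 ≤ x j) → ∑ j, x j ≤ 1 →
      ((∃ i, x i = 0) ∨ ∑ j, x j = 1) → MvPolynomial.eval x v = 0) :
    ∃ q : MvPolynomial (Fin ℓ) ℝ, q.totalDegree ≤ m - (ℓ + 1) ∧
      v = (∏ i, MvPolynomial.X i) * (1 - ∑ i, MvPolynomial.X i) * q := by
  have : Nonempty (Fin ℓ) := ⟨⟨0, hℓ⟩⟩
  obtain ⟨q, rfl⟩ := prod_barycentric_dvd fun o x ⟨hx₀, hx₁⟩ ho => hbd x hx₀ hx₁ <| by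
    cases o with
    | none => exact .inr (by linarith [eval_barycentric_none x ▸ ho])
    | some i => exact .inl ⟨i, eval_barycentric_some x i ▸ ho⟩
  refine ⟨q, ?_, by rw [Fintype.prod_option]; simp only [barycentric]; ring⟩
  rcases eq_or_ne q 0 with rfl | hq
  · simp
  · rw [totalDegree_mul_of_isDomain (Finset.prod_ne_zero_iff.mpr fun o _ => barycentric_ne_zero o)
      hq, totalDegree_prod_barycentric, Fintype.card_fin] at hv
    omega

/-- **Bubble factorization on the standard simplex.**
Let `ℓ ≥ 1`, `m ≥ ℓ+1`, and let `v` be a real polynomial in `x_1, …, x_ℓ` of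
total degree at most `m` vanishing at every point of the boundary of the
standard simplex `Δ_ℓ` (each facet `{x_i = 0}` and `{∑ x_j = 1}`).  Then
`v = x_1 ⋯ x_ℓ (1 - ∑ x_j) q` for some polynomial `q` of total degree at most
`m - (ℓ+1)`. -/
theorem bubble_factorization (ℓ m : ℕ) (hℓ : 1 ≤ ℓ) (hm : ℓ + 1 ≤ m)
    (v : MvPolynomial (Fin ℓ) ℝ) (hv : v.totalDegree ≤ m)
    (hbd : ∀ x : Fin ℓ → ℝ, (∀ j, 0 ≤ x j) → ∑ j, x j ≤ 1 →
      ((∃ i, x i = 0) ∨ ∑ j, x j = 1) → MvPolynomial.eval x v = 0) :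
    ∃ q : MvPolynomial (Fin ℓ) ℝ, q.totalDegree ≤ m - (ℓ + 1) ∧
      v = (∏ i, MvPolynomial.X i) * (1 - ∑ i, MvPolynomial.X i) * q :=
  bubble_factorization_general ℓ m hℓ v hv hbd
end

section
/- Let k ≥ 1 be an odd integer and let ν ∈ {0,…,k−1}. Then γ_ν · ∫_{−1}^{1} ( P_ν^{(1,1)}(x) − c_{ν,k} · P_{k−1}^{(1,1)}(x) ) dx = 1 if ν = k−1 and = 0 otherwise. -/
/-! Since `P_ν^{(1,1)}` is a multiple of `L_{ν+1}'`, its integral over `[-1, 1]` is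
`2/(ν+2) (L_{ν+1}(1) - L_{ν+1}(-1)) = 2/(ν+2) (1 - (-1)^{ν+1})`; for odd `k` the integral of
`P_{k-1}^{(1,1)}` is `4/(k+1)`, and `c_{ν,k}` is chosen exactly so that the two integrals cancel
for `ν ≠ k - 1`, while for `ν = k - 1` the factor `γ_{k-1}` normalizes what remains. -/

/-- The Legendre polynomial
`L_n(x) = 2^{-n} ∑_{s=0}^{n} C(n,s)² (x-1)^{n-s} (x+1)^s`. -/
noncomputable def Leg (n : ℕ) (x : ℝ) : ℝ :=
  (1 / 2 ^ n) * ∑ s ∈ Finset.range (n + 1),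
    (n.choose s : ℝ) ^ 2 * (x - 1) ^ (n - s) * (x + 1) ^ s

/-- The Jacobi polynomial `P_ν^{(1,1)}(x) = (2/(ν+2)) L_{ν+1}'(x)`. -/
noncomputable def Jac11 (ν : ℕ) (x : ℝ) : ℝ :=
  (2 / (ν + 2 : ℝ)) * deriv (Leg (ν + 1)) x

/-- The normalization constant `γ_ν = (2ν+3)(ν+2)/(8(ν+1))`. -/
noncomputable def gam (ν : ℕ) : ℝ :=
  ((2 * ν + 3) * (ν + 2) : ℝ) / (8 * (ν + 1))

/-- The constant `c_{ν,k}`: for `ν ≤ k-2` it is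
`((1-(-1)^{ν+1})/2) (k+1)/(ν+2)`, and `c_{k-1,k} = 1/(2k+1)`. -/
noncomputable def cJ (ν k : ℕ) : ℝ :=
  if ν = k - 1 then 1 / (2 * k + 1)
  else ((1 - (-1 : ℝ) ^ (ν + 1)) / 2) * (k + 1) / (ν + 2)

theorem contDiff_Leg (n : ℕ) : ContDiff ℝ 1 (Leg n) := by
  unfold Leg
  fun_prop

theorem integral_deriv_Leg (n : ℕ) (a b : ℝ) :
    ∫ x in a..b, deriv (Leg n) x = Leg n b - Leg n a :=
  intervalIntegral.integral_deriv_eq_sub (fun x _ => (contDiff_Leg n).differentiable one_ne_zero x)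
    (((contDiff_Leg n).continuous_deriv le_rfl).intervalIntegrable a b)

theorem Leg_one (n : ℕ) : Leg n 1 = 1 := by
  unfold Leg
  rw [Finset.sum_eq_single_of_mem n (Finset.self_mem_range_succ n)]
  · norm_num
  · intro s hs hsn
    have : n - s ≠ 0 := by grind
    simp [zero_pow this]

theorem Leg_neg_one (n : ℕ) : Leg n (-1) = (-1) ^ n := by
  unfold Leg
  rw [Finset.sum_eq_single_of_mem 0 (by simp)]
  · rw [show (-1 : ℝ) - 1 = -2 by norm_num, neg_pow]
    field_simp
    simp [mul_comm]
  · intro s _ hs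
    simp [zero_pow hs]

theorem intervalIntegrable_Jac11 (ν : ℕ) (a b : ℝ) :
    IntervalIntegrable (Jac11 ν) MeasureTheory.volume a b :=
  (continuous_const.mul ((contDiff_Leg (ν + 1)).continuous_deriv le_rfl)).intervalIntegrable a b

theorem integral_Jac11 (ν : ℕ) :
    ∫ x in (-1 : ℝ)..1, Jac11 ν x = 2 / (ν + 2) * (1 - (-1) ^ (ν + 1)) := by
  simp only [Jac11, intervalIntegral.integral_const_mul, integral_deriv_Leg, Leg_one,
    Leg_neg_one]

theorem integral_Jac11_of_even {ν : ℕ} (hν : Even ν) :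
    ∫ x in (-1 : ℝ)..1, Jac11 ν x = 4 / (ν + 2) := by
  rw [integral_Jac11, hν.add_one.neg_one_pow]
  ring

theorem edge_dof_biduality_nonconforming_general (k : ℕ) (hk : Odd k) (ν : ℕ) :
    gam ν * ∫ x in (-1:ℝ)..1, (Jac11 ν x - cJ ν k * Jac11 (k - 1) x)
      = if ν = k - 1 then 1 else 0 := by
  obtain ⟨n, rfl⟩ := hk
  rw [intervalIntegral.integral_sub (intervalIntegrable_Jac11 ν _ _)
      ((intervalIntegrable_Jac11 _ _ _).const_mul _),
    intervalIntegral.integral_const_mul, Nat.add_sub_cancel,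
    integral_Jac11_of_even (even_two_mul n), cJ, gam]
  push_cast
  split_ifs with hν
  · subst hν
    rw [integral_Jac11_of_even (even_two_mul n)]
    push_cast
    field_simp
    ring
  · rw [integral_Jac11]
    field_simp
    ring

/-- For odd `k ≥ 1` and `ν ∈ {0, …, k-1}`:
`γ_ν ∫_{-1}^{1} (P_ν^{(1,1)}(x) - c_{ν,k} P_{k-1}^{(1,1)}(x)) dx` equals `1`
if `ν = k-1` and `0` otherwise. -/
theorem edge_dof_biduality_nonconforming (k : ℕ) (hk : Odd k) (ν : ℕ)
    (hν : ν < k) :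
    gam ν * ∫ x in (-1:ℝ)..1, (Jac11 ν x - cJ ν k * Jac11 (k - 1) x)
      = if ν = k - 1 then 1 else 0 :=
  edge_dof_biduality_nonconforming_general k hk ν
end
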